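/- The infinite sum of 2^i/(i * binom(2i, i)) for i from 1 to infinity equals π/2. -/

import Mathlib

/-!
The Beta integral `∫₀¹ xⁿ (1 - x)ⁿ⁺¹ dx = n! (n+1)! / (2n+2)!` equals `1 / ((n+1) C(2n+2, n+1))`,
so the series is `∫₀¹ ∑ₙ 2(1 - x) (2x(1 - x))ⁿ dx`. Since `2x(1 - x) ≤ 1/2` the terms are dominated
by `2 / 2ⁿ`, so sum and integral may be swapped; the geometric series sums to
`2(1 - x) / (1 - 2x(1 - x))`, whose antiderivative `arctan (2x - 1) - log (1 - 2x(1 - x)) / 2`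
increases by `π/4 - (-π/4)` over `[0, 1]`.
-/

open Real intervalIntegral
open scoped Nat

theorem mul_integral_pow_mul_one_sub_pow_succ (m n : ℕ) :
    ((m : ℝ) + 1) * ∫ x in (0 : ℝ)..1, x ^ m * (1 - x) ^ (n + 1)
      = ((n : ℝ) + 1) * ∫ x in (0 : ℝ)..1, x ^ (m + 1) * (1 - x) ^ n := by
  have hderiv : ∀ x ∈ Set.uIcc (0 : ℝ) 1,
      HasDerivAt (fun x : ℝ => x ^ (m + 1) * (1 - x) ^ (n + 1))
        (((m : ℝ) + 1) * (x ^ m * (1 - x) ^ (n + 1))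
          - ((n : ℝ) + 1) * (x ^ (m + 1) * (1 - x) ^ n)) x := by
    intro x _
    refine ((hasDerivAt_pow (m + 1) x).mul
      (((hasDerivAt_id' x).const_sub 1).pow (n + 1))).congr_deriv ?_
    simp only [Pi.pow_apply, Nat.cast_add, Nat.cast_one, add_tsub_cancel_right]
    ring
  have hint (k l : ℕ) :
      IntervalIntegrable (fun x : ℝ => x ^ k * (1 - x) ^ l) MeasureTheory.volume 0 1 :=
    (by fun_prop : Continuous fun x : ℝ => x ^ k * (1 - x) ^ l).intervalIntegrable 0 1
  have hzero := integral_eq_sub_of_hasDerivAt hderiv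
    (((hint m (n + 1)).const_mul _).sub ((hint (m + 1) n).const_mul _))
  rw [integral_sub ((hint m (n + 1)).const_mul _) ((hint (m + 1) n).const_mul _),
    integral_const_mul, integral_const_mul] at hzero
  simpa [sub_eq_zero] using hzero

theorem integral_pow_mul_one_sub_pow (m n : ℕ) :
    ∫ x in (0 : ℝ)..1, x ^ m * (1 - x) ^ n = (m ! * n ! : ℝ) / (m + n + 1)! := by
  induction n generalizing m with
  | zero =>
    simp only [pow_zero, mul_one, integral_pow, Nat.factorial_zero, add_zero, Nat.factorial_succ]
    push_cast
    field_simp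
    norm_num
  | succ n ih =>
    have hrec := mul_integral_pow_mul_one_sub_pow_succ m n
    rw [ih (m + 1), show m + 1 + n + 1 = m + (n + 1) + 1 by omega] at hrec
    have hm : (m : ℝ) + 1 ≠ 0 := by positivity
    rw [← mul_right_inj' hm, hrec]
    push_cast [Nat.factorial_succ]
    ring

theorem integral_pow_mul_one_sub_pow_succ_eq_one_div_choose (n : ℕ) :
    ∫ x in (0 : ℝ)..1, x ^ n * (1 - x) ^ (n + 1)
      = 1 / (((n : ℝ) + 1) * (Nat.choose (2 * (n + 1)) (n + 1) : ℝ)) := by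
  rw [integral_pow_mul_one_sub_pow, Nat.cast_choose ℝ (by omega : n + 1 ≤ 2 * (n + 1)),
    show 2 * (n + 1) - (n + 1) = n + 1 by omega, show n + (n + 1) + 1 = 2 * (n + 1) by omega]
  push_cast [Nat.factorial_succ]
  field_simp

theorem two_pow_succ_mul_pow_mul_one_sub_pow_succ (n : ℕ) (x : ℝ) :
    2 ^ (n + 1) * (x ^ n * (1 - x) ^ (n + 1)) = 2 * (1 - x) * (2 * x * (1 - x)) ^ n := by
  rw [mul_pow, mul_pow]
  ring

theorem two_mul_mul_one_sub_le_half (x : ℝ) : 2 * x * (1 - x) ≤ 1 / 2 := by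
  nlinarith [sq_nonneg (2 * x - 1)]

theorem hasSum_two_pow_succ_mul_pow_mul_one_sub_pow_succ {x : ℝ} (hx : x ∈ Set.Icc (0 : ℝ) 1) :
    HasSum (fun n : ℕ => 2 ^ (n + 1) * (x ^ n * (1 - x) ^ (n + 1)))
      (2 * (1 - x) / (1 - 2 * x * (1 - x))) := by
  simp only [two_pow_succ_mul_pow_mul_one_sub_pow_succ, div_eq_mul_inv]
  exact (hasSum_geometric_of_lt_one (by nlinarith [hx.1, hx.2])
    ((two_mul_mul_one_sub_le_half x).trans_lt (by norm_num))).mul_left _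

theorem norm_two_pow_succ_mul_pow_mul_one_sub_pow_succ_le {x : ℝ} (hx : x ∈ Set.Icc (0 : ℝ) 1)
    (n : ℕ) : ‖2 ^ (n + 1) * (x ^ n * (1 - x) ^ (n + 1))‖ ≤ 2 * (1 / 2) ^ n := by
  obtain ⟨hx0, hx1⟩ := hx
  have hq : 0 ≤ 2 * x * (1 - x) := by nlinarith
  rw [two_pow_succ_mul_pow_mul_one_sub_pow_succ, norm_of_nonneg (by positivity)]
  gcongr
  · linarith
  · exact two_mul_mul_one_sub_le_half x

theorem integral_two_mul_one_sub_div_eq_pi_div_two :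
    ∫ x in (0 : ℝ)..1, 2 * (1 - x) / (1 - 2 * x * (1 - x)) = π / 2 := by
  have hq (x : ℝ) : 0 < 1 - 2 * x * (1 - x) := by nlinarith [two_mul_mul_one_sub_le_half x]
  have hderiv : ∀ x ∈ Set.uIcc (0 : ℝ) 1,
      HasDerivAt (fun x : ℝ => arctan (2 * x - 1) - log (1 - 2 * x * (1 - x)) / 2)
        (2 * (1 - x) / (1 - 2 * x * (1 - x))) x := by
    intro x _
    have hlin : HasDerivAt (fun x : ℝ => 2 * x - 1) 2 x := by
      simpa using ((hasDerivAt_id x).const_mul 2).sub_const 1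
    have hquad : HasDerivAt (fun x : ℝ => 1 - 2 * x * (1 - x)) (4 * x - 2) x := by
      refine ((((hasDerivAt_id' x).const_mul 2).mul
        ((hasDerivAt_id' x).const_sub 1)).const_sub 1).congr_deriv ?_
      ring
    refine ((hlin.arctan).sub ((hquad.log (hq x).ne').div_const 2)).congr_deriv ?_
    have : 1 + (2 * x - 1) ^ 2 = 2 * (1 - 2 * x * (1 - x)) := by ring
    rw [this]
    field_simp
    ring
  have hcont : Continuous fun x : ℝ => 2 * (1 - x) / (1 - 2 * x * (1 - x)) :=
    Continuous.div (by fun_prop) (by fun_prop) fun x => (hq x).ne'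
  rw [integral_eq_sub_of_hasDerivAt hderiv (hcont.intervalIntegrable 0 1)]
  norm_num [arctan_one, arctan_neg]
  ring

theorem hasSum_integral_two_pow_succ_mul_pow_mul_one_sub_pow_succ :
    HasSum (fun n : ℕ => ∫ x in (0 : ℝ)..1, 2 ^ (n + 1) * (x ^ n * (1 - x) ^ (n + 1)))
      (∫ x in (0 : ℝ)..1, 2 * (1 - x) / (1 - 2 * x * (1 - x))) := by
  have hIcc : ∀ x ∈ Set.uIoc (0 : ℝ) 1, x ∈ Set.Icc (0 : ℝ) 1 := fun x hx =>
    Set.Ioc_subset_Icc_self (by rwa [Set.uIoc_of_le zero_le_one] at hx)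
  refine hasSum_integral_of_dominated_convergence (fun n _ => 2 * (1 / 2 : ℝ) ^ n)
    (fun n => (by fun_prop : Continuous fun x : ℝ => 2 ^ (n + 1) * (x ^ n * (1 - x) ^ (n + 1)))
      |>.aestronglyMeasurable)
    (fun n => .of_forall fun x hx =>
      norm_two_pow_succ_mul_pow_mul_one_sub_pow_succ_le (hIcc x hx) n)
    (.of_forall fun _ _ => (summable_geometric_two).mul_left 2)
    intervalIntegrable_const
    (.of_forall fun x hx => hasSum_two_pow_succ_mul_pow_mul_one_sub_pow_succ (hIcc x hx))

theorem stmt_1 : (∑' i : ℕ, (2:ℝ)^(i+1) / (((i:ℝ)+1) * ((Nat.choose (2*(i+1)) (i+1)) : ℝ))) = Real.pi / 2 := by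
  have hterm (n : ℕ) :
      (2 : ℝ) ^ (n + 1) / (((n : ℝ) + 1) * (Nat.choose (2 * (n + 1)) (n + 1) : ℝ))
        = ∫ x in (0 : ℝ)..1, 2 ^ (n + 1) * (x ^ n * (1 - x) ^ (n + 1)) := by
    rw [integral_const_mul, integral_pow_mul_one_sub_pow_succ_eq_one_div_choose, mul_one_div]
  rw [tsum_congr hterm, hasSum_integral_two_pow_succ_mul_pow_mul_one_sub_pow_succ.tsum_eq,
    integral_two_mul_one_sub_div_eq_pi_div_two]
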